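/- arXiv:1801.08737 — 5 statements merged into one kernel-verified Lean document; each statement's English description precedes it below -/
import Mathlib

section
/- Every integer v with |v| ≤ B can be written as v = Σ_{j=1}^{δ_B} B_j · v^(j) for some coefficients v^(j) ∈ {-1,0,1}, where δ_B = ⌊log₂ B⌋ + 1 and B_j = ⌊(B + 2^{j-1})/2^j⌋. -/
/-!
Greedy balanced halving: the first weight is `⌈B/2⌉`, and the remaining weights of `B` are
exactly the weights of `⌊B/2⌋`. Choosing the first digit `c ∈ {-1, 0, 1}` so that
`|v - c ⌈B/2⌉| ≤ ⌊B/2⌋` reduces the problem for `B` to the problem for `⌊B/2⌋`, with one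
digit fewer; after `⌊log₂ B⌋ + 1` halvings the bound has become `0`.
-/

lemma halving_weight_succ (B j : ℕ) :
    (B + 2 ^ (j + 1)) / 2 ^ (j + 1 + 1) = (B / 2 + 2 ^ j) / 2 ^ (j + 1) := by
  rw [pow_succ' 2 (j + 1), ← Nat.div_div_eq_div_mul, pow_succ 2 j, Nat.add_mul_div_right _ _ two_pos]

lemma exists_digit_abs_sub_le (B : ℕ) {v : ℤ} (hv : |v| ≤ B) :
    ∃ c : ℤ, (c = -1 ∨ c = 0 ∨ c = 1) ∧ |v - c * ((B + 1) / 2 : ℕ)| ≤ (B / 2 : ℕ) := by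
  rw [abs_le] at hv
  by_cases hsmall : |v| ≤ (B / 2 : ℕ)
  · exact ⟨0, by simpa using hsmall⟩
  rw [abs_le, not_and_or, not_le, not_le] at hsmall
  rcases hsmall with hneg | hpos
  · exact ⟨-1, by simp, by rw [abs_le]; omega⟩
  · exact ⟨1, by simp, by rw [abs_le]; omega⟩

lemma exists_balanced_halving_digits (n B : ℕ) (hB : B < 2 ^ n) {v : ℤ} (hv : |v| ≤ B) :
    ∃ c : Fin n → ℤ, (∀ j, c j = -1 ∨ c j = 0 ∨ c j = 1) ∧
      v = ∑ j : Fin n, (((B + 2 ^ (j : ℕ)) / 2 ^ ((j : ℕ) + 1) : ℕ) : ℤ) * c j := by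
  induction n generalizing B v with
  | zero =>
    refine ⟨Fin.elim0, fun j => j.elim0, ?_⟩
    have hB0 : B = 0 := by simpa using hB
    subst hB0
    simpa using hv
  | succ n ih =>
    obtain ⟨c₀, hc₀, hrem⟩ := exists_digit_abs_sub_le B hv
    have hhalf : B / 2 < 2 ^ n := by rw [pow_succ] at hB; omega
    obtain ⟨c, hc, hsum⟩ := ih (B / 2) hhalf hrem
    refine ⟨Fin.cons c₀ c, Fin.cases hc₀ hc, ?_⟩
    simp only [Fin.sum_univ_succ, Fin.cons_zero, Fin.cons_succ, Fin.val_zero, Fin.val_succ,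
      halving_weight_succ, pow_zero, zero_add, pow_one]
    linarith

theorem stmt5_general (B : ℕ) (v : ℤ) (hv : |v| ≤ (B : ℤ)) :
    ∃ c : Fin (Nat.log 2 B + 1) → ℤ,
      (∀ j, c j = -1 ∨ c j = 0 ∨ c j = 1) ∧
      v = ∑ j : Fin (Nat.log 2 B + 1), (((B + 2 ^ (j : ℕ)) / 2 ^ ((j : ℕ) + 1) : ℕ) : ℤ) * c j :=
  exists_balanced_halving_digits _ B (Nat.lt_pow_succ_log_self one_lt_two B) hv

/-- Every integer `v` with `|v| ≤ B` can be written as `v = Σ_{j=1}^{δ_B} B_j · v^(j)`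
with coefficients `v^(j) ∈ {-1,0,1}`, where `δ_B = ⌊log₂ B⌋ + 1` and
`B_j = ⌊(B + 2^{j-1}) / 2^j⌋`. -/
theorem stmt5 (B : ℕ) (hB : 0 < B) (v : ℤ) (hv : |v| ≤ (B : ℤ)) :
    ∃ c : Fin (Nat.log 2 B + 1) → ℤ,
      (∀ j, c j = -1 ∨ c j = 0 ∨ c j = 1) ∧
      v = ∑ j : Fin (Nat.log 2 B + 1), (((B + 2 ^ (j : ℕ)) / 2 ^ ((j : ℕ) + 1) : ℕ) : ℤ) * c j :=
  stmt5_general B v hv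
end

section
/- Any vector v ∈ [-B,B]^m (integer entries bounded in absolute value by B) can be decomposed as v = H_{m,B} · v̄ for some v̄ ∈ {-1,0,1}^{m·δ_B}, where H_{m,B} is the block-diagonal matrix with m copies of the row (B_1, ..., B_{δ_B}). -/
/-!
Balanced binary expansion. The entries satisfy `B_1 = ⌈B/2⌉` and `B_{j+1}(B) = B_j(⌊B/2⌋)`,
with `⌈B/2⌉ + ⌊B/2⌋ = B` and `⌈B/2⌉ ≤ ⌊B/2⌋ + 1`. So for `|a| ≤ B` one can pick a trit `ε`
with `|a - ε ⌈B/2⌉| ≤ ⌊B/2⌋` and recurse on `⌊B/2⌋`; the recursion depth matches `δ_B`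
because `⌊log₂ B⌋ = ⌊log₂ ⌊B/2⌋⌋ + 1` for `B ≥ 2`.
-/

/-- `gadgetEntry B j` is the paper's `B_{j+1}`. -/
def gadgetEntry (B j : ℕ) : ℕ := (B + 2 ^ j) / 2 ^ (j + 1)

lemma gadgetEntry_zero (B : ℕ) : gadgetEntry B 0 = (B + 1) / 2 := rfl

lemma gadgetEntry_succ (B j : ℕ) : gadgetEntry B (j + 1) = gadgetEntry (B / 2) j := by
  have half : (B + 2 ^ (j + 1)) / 2 = B / 2 + 2 ^ j := by
    rw [pow_succ]
    omega
  rw [gadgetEntry, gadgetEntry, pow_succ 2 (j + 1), mul_comm, ← Nat.div_div_eq_div_mul, half]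

lemma exists_trit_abs_sub_le {a b₁ b₂ : ℤ} (hb₂ : 0 ≤ b₂) (hb : b₁ ≤ b₂ + 1)
    (ha : |a| ≤ b₁ + b₂) :
    ∃ ε : ℤ, (ε = -1 ∨ ε = 0 ∨ ε = 1) ∧ |a - ε * b₁| ≤ b₂ := by
  rw [abs_le] at ha
  rcases lt_or_ge b₂ a with hpos | hle
  · exact ⟨1, by simp, abs_le.2 ⟨by linarith, by linarith⟩⟩
  rcases lt_or_ge a (-b₂) with hneg | hge
  · exact ⟨-1, by simp, abs_le.2 ⟨by linarith, by linarith⟩⟩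
  · exact ⟨0, by simp, by simpa [abs_le] using ⟨hge, hle⟩⟩

lemma exists_trits_eq_sum_gadgetEntry (B : ℕ) (a : ℤ) (ha : |a| ≤ B) :
    ∃ ε : ℕ → ℤ, (∀ j, ε j = -1 ∨ ε j = 0 ∨ ε j = 1) ∧
      a = ∑ j ∈ Finset.range (Nat.log 2 B + 1), (gadgetEntry B j : ℤ) * ε j := by
  induction B using Nat.strong_induction_on generalizing a with
  | _ B ih =>
  rcases le_or_gt B 1 with hB | hB
  · have ha' : a = -1 ∨ a = 0 ∨ a = 1 := by rw [abs_le] at ha; omega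
    refine ⟨fun _ => a, fun _ => ha', ?_⟩
    interval_cases B <;> simp at ha ⊢ <;> simp [gadgetEntry, ha]
  obtain ⟨ε₀, hε₀, hrest⟩ := exists_trit_abs_sub_le (a := a) (b₁ := ((B + 1) / 2 : ℕ))
    (b₂ := (B / 2 : ℕ)) (by positivity) (by omega) (by omega)
  obtain ⟨ε, hε, hsum⟩ := ih (B / 2) (by omega) _ hrest
  refine ⟨Nat.rec ε₀ fun j _ => ε j, fun j => j.casesOn hε₀ fun j => hε j, ?_⟩
  simp only [Nat.log_of_one_lt_of_le one_lt_two hB, Finset.sum_range_succ', gadgetEntry_succ,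
    gadgetEntry_zero, Nat.rec_zero, ← hsum]
  ring

theorem stmt7_general (B m : ℕ) (v : Fin m → ℤ) (hv : ∀ i, |v i| ≤ (B : ℤ)) :
    ∃ vbar : Fin m → Fin (Nat.log 2 B + 1) → ℤ,
      (∀ i j, vbar i j = -1 ∨ vbar i j = 0 ∨ vbar i j = 1) ∧
      ∀ i, v i = ∑ j : Fin (Nat.log 2 B + 1), (((B + 2 ^ (j : ℕ)) / 2 ^ ((j : ℕ) + 1) : ℕ) : ℤ) * vbar i j := by
  choose ε hε hsum using fun i => exists_trits_eq_sum_gadgetEntry B (v i) (hv i)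
  refine ⟨fun i j => ε i j, fun i j => hε i j, fun i => ?_⟩
  rw [hsum i, ← Fin.sum_univ_eq_sum_range (fun j => (gadgetEntry B j : ℤ) * ε i j)]
  rfl

/-- Any vector `v ∈ [-B,B]^m` can be decomposed as `v = H_{m,B} · v̄` for some
`v̄ ∈ {-1,0,1}^{m·δ_B}`, where `H_{m,B}` is the block-diagonal matrix with `m`
copies of the row `(B_1, …, B_{δ_B})` (stated blockwise). -/
theorem stmt7 (B m : ℕ) (hB : 0 < B) (v : Fin m → ℤ) (hv : ∀ i, |v i| ≤ (B : ℤ)) :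
    ∃ vbar : Fin m → Fin (Nat.log 2 B + 1) → ℤ,
      (∀ i j, vbar i j = -1 ∨ vbar i j = 0 ∨ vbar i j = 1) ∧
      ∀ i, v i = ∑ j : Fin (Nat.log 2 B + 1), (((B + 2 ^ (j : ℕ)) / 2 ^ ((j : ℕ) + 1) : ℕ) : ℤ) * vbar i j :=
  stmt7_general B m v hv
end

section
/- The Merkle tree update algorithm is correct: after running TUpdate_A(bin(j), d*), which replaces the leaf at position bin(j) with d* and recomputes only the ℓ nodes along the path from that leaf to the root, the resulting tree equals the tree TAcc_A would build from scratch on the leaf multiset with d_j replaced by d*. -/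
/-- The value of the Merkle-tree node at prefix `p` whose subtree has depth `d`;
the leaves are given by `f` on full index bit-strings. -/
def nodeVal {α : Type*} (h : α → α → α) (f : List Bool → α) : ℕ → List Bool → α
  | 0, p => f p
  | d + 1, p => h (nodeVal h f d (p ++ [false])) (nodeVal h f d (p ++ [true]))

/-- The update algorithm's recomputation along the path: `recompute h f d p rest`
is the recomputed value at the node with prefix `p`, where `rest` is the remaining
path to the updated leaf (whose new value is `d`), using the *old* sibling subtree
values (computed from `f`). -/
def recompute {α : Type*} (h : α → α → α) (f : List Bool → α) (d : α) :
    List Bool → List Bool → α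
  | _, [] => d
  | p, b :: rest =>
      if b then h (nodeVal h f rest.length (p ++ [false]))
          (recompute h f d (p ++ [true]) rest)
      else h (recompute h f d (p ++ [false]) rest)
          (nodeVal h f rest.length (p ++ [true]))

lemma offPath {α : Type*} (h : α → α → α) (f : List Bool → α) (j : List Bool) (d : α) :
    ∀ (t : ℕ) (p : List Bool), ¬ p <+: j →
      nodeVal h (fun s => if s = j then d else f s) t p = nodeVal h f t p := by
  intro t
  induction t with
  | zero =>
      intro p hp
      simp only [nodeVal]
      rw [if_neg]
      intro hpj; exact hp (hpj ▸ List.prefix_refl p)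
  | succ n ih =>
      intro p hp
      simp only [nodeVal]
      rw [ih _ (fun hpre => hp ((List.prefix_append p [false]).trans hpre)),
          ih _ (fun hpre => hp ((List.prefix_append p [true]).trans hpre))]

/-- Merkle update correctness: after replacing the leaf at position `j` by `d` and
recomputing only the nodes along the path from that leaf to the root (from the old
sibling values), the resulting tree coincides with the tree built from scratch on
the modified leaves: every node on the path equals the corresponding node of the
fresh tree, and every node off the path is unchanged. -/
theorem stmt15 {α : Type*} (h : α → α → α) (ℓ : ℕ) (f : List Bool → α)
    (j : List Bool) (hj : j.length = ℓ) (d : α) :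
    (∀ p rest : List Bool, p ++ rest = j →
        recompute h f d p rest =
          nodeVal h (fun s => if s = j then d else f s) rest.length p) ∧
    (∀ (p : List Bool) (t : ℕ), p.length + t = ℓ → ¬ p <+: j →
        nodeVal h (fun s => if s = j then d else f s) t p = nodeVal h f t p) := by
  constructor
  · intro p rest
    induction rest generalizing p with
    | nil =>
        intro hp
        simp only [List.append_nil] at hp
        subst hp
        simp [recompute, nodeVal]
    | cons b rest ih =>
        intro hp
        have key : ∀ b' : Bool, b' ≠ b → ¬ (p ++ [b'] <+: j) := by
          intro b' hb' hpre
          rw [← hp] at hpre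
          obtain ⟨s, hs⟩ := hpre
          simp only [List.append_assoc] at hs
          have := List.append_cancel_left hs
          simp at this
          exact hb' this.1
        have hp' : (p ++ [b]) ++ rest = j := by
          rw [List.append_assoc]; simpa using hp
        cases b with
        | false =>
            simp only [recompute, if_neg (by simp : ¬ (false : Bool) = true), List.length_cons, nodeVal]
            rw [ih _ hp', offPath h f j d rest.length (p ++ [true]) (key true (by simp))]
        | true =>
            simp only [recompute, if_pos rfl, if_true, List.length_cons, nodeVal]
            rw [ih _ hp', offPath h f j d rest.length (p ++ [false]) (key false (by simp))]
  · intro p t _ hp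
    exact offPath h f j d t p hp
end

section
/- Tracing soundness core argument: suppose S_0, S_1 ∈ Z^{n×ℓ}, y_0, y_1 ∈ Z^ℓ with ‖y_b‖_∞ ≤ ⌈q/5⌉, and bit strings b_0 ≠ b_1 ∈ {0,1}^ℓ satisfy c_2 - S_bᵀ·c_1 = y_b + ⌊q/2⌋·b_b mod q for b ∈ {0,1} (for some fixed c_1 ∈ Z_q^n, c_2 ∈ Z_q^ℓ). If 2⌈q/5⌉ < ⌊q/2⌋ and 2⌈q/5⌉ + ⌊q/2⌋ < q, then S_0ᵀ·c_1 ≠ S_1ᵀ·c_1 mod q; in particular S_0 ≠ S_1. -/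
/-- Tracing soundness core argument: two openings of the same ciphertext
`(c₁, c₂)` to distinct bit strings `b₀ ≠ b₁`, with noise terms bounded by
`⌈q/5⌉`, force `S₀ᵀ·c₁ ≠ S₁ᵀ·c₁ mod q`; in particular `S₀ ≠ S₁`. -/
theorem stmt16 (q n ℓ : ℕ) (hq : 5 ≤ q)
    (S0 S1 : Matrix (Fin n) (Fin ℓ) ℤ) (y0 y1 : Fin ℓ → ℤ)
    (hy0 : ∀ i, |y0 i| ≤ (((q + 4) / 5 : ℕ) : ℤ))
    (hy1 : ∀ i, |y1 i| ≤ (((q + 4) / 5 : ℕ) : ℤ))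
    (b0 b1 : Fin ℓ → ℤ)
    (hb0 : ∀ i, b0 i = 0 ∨ b0 i = 1) (hb1 : ∀ i, b1 i = 0 ∨ b1 i = 1)
    (hbne : b0 ≠ b1)
    (c1 : Fin n → ZMod q) (c2 : Fin ℓ → ZMod q)
    (heq0 : c2 - ((S0.map (Int.cast : ℤ → ZMod q)).transpose).mulVec c1 =
        fun i => ((y0 i : ZMod q)) + ((q / 2 : ℕ) : ZMod q) * ((b0 i : ZMod q)))
    (heq1 : c2 - ((S1.map (Int.cast : ℤ → ZMod q)).transpose).mulVec c1 =
        fun i => ((y1 i : ZMod q)) + ((q / 2 : ℕ) : ZMod q) * ((b1 i : ZMod q)))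
    (hq1 : 2 * ((q + 4) / 5) < q / 2)
    (hq2 : 2 * ((q + 4) / 5) + q / 2 < q) :
    ((S0.map (Int.cast : ℤ → ZMod q)).transpose).mulVec c1 ≠
        ((S1.map (Int.cast : ℤ → ZMod q)).transpose).mulVec c1 ∧
      S0 ≠ S1 := by

  have main : ((S0.map (Int.cast : ℤ → ZMod q)).transpose).mulVec c1 ≠
      ((S1.map (Int.cast : ℤ → ZMod q)).transpose).mulVec c1 := by
    intro hEq
    have hfun : (fun i => ((y0 i : ZMod q)) + ((q / 2 : ℕ) : ZMod q) * ((b0 i : ZMod q)))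
        = (fun i => ((y1 i : ZMod q)) + ((q / 2 : ℕ) : ZMod q) * ((b1 i : ZMod q))) := by
      rw [← heq0, ← heq1, hEq]
    obtain ⟨i, hi⟩ := Function.ne_iff.mp hbne
    have hcast : ((y0 i + (q / 2 : ℕ) * b0 i : ℤ) : ZMod q)
        = ((y1 i + (q / 2 : ℕ) * b1 i : ℤ) : ZMod q) := by
      have := congrFun hfun i
      simpa only [Int.cast_add, Int.cast_mul, Int.cast_natCast] using this
    have hdvd : (q : ℤ) ∣ (y0 i + (q / 2 : ℕ) * b0 i) - (y1 i + (q / 2 : ℕ) * b1 i) := by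
      have := (ZMod.intCast_eq_intCast_iff _ _ _).mp hcast
      exact (Int.ModEq.dvd this.symm)
    set B : ℤ := (((q + 4) / 5 : ℕ) : ℤ) with hB
    set h : ℤ := ((q / 2 : ℕ) : ℤ) with hh
    have hq1' : 2 * B < h := by rw [hB, hh]; exact_mod_cast hq1
    have hq2' : 2 * B + h < (q : ℤ) := by rw [hB, hh]; exact_mod_cast hq2
    have hBnn : 0 ≤ B := by positivity
    set x : ℤ := (y0 i + (q / 2 : ℕ) * b0 i) - (y1 i + (q / 2 : ℕ) * b1 i) with hx
    have hd : |y0 i - y1 i| ≤ 2 * B := by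
      have := abs_sub (y0 i) (y1 i)
      have h0 := hy0 i; have h1 := hy1 i
      calc |y0 i - y1 i| ≤ |y0 i| + |y1 i| := abs_sub _ _
        _ ≤ 2 * B := by linarith
    have hxz : x = 0 := by
      refine Int.eq_zero_of_abs_lt_dvd hdvd ?_
      have : x = (y0 i - y1 i) + h * (b0 i - b1 i) := by rw [hx, hh]; ring
      rcases hb0 i with h0 | h0 <;> rcases hb1 i with h1 | h1 <;>
        simp [h0, h1] at hi ⊢ <;>
        rw [this] <;> simp [h0, h1] <;>
        · rw [abs_lt]
          constructor <;> nlinarith [abs_le.mp hd]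
    have hxne : x ≠ 0 := by
      have : x = (y0 i - y1 i) + h * (b0 i - b1 i) := by rw [hx, hh]; ring
      rcases hb0 i with h0 | h0 <;> rcases hb1 i with h1 | h1 <;>
        simp [h0, h1] at hi ⊢ <;> rw [this] <;> simp [h0, h1] <;>
        intro hc <;> nlinarith [abs_le.mp hd]
    exact hxne hxz
  refine ⟨main, ?_⟩
  intro hS
  exact main (by rw [hS])
end

section
/- Stern protocol special soundness (abstract form): if COM is a (perfectly) binding commitment, M ∈ Z_q^{r×D}, u ∈ Z_q^r, VALID ⊆ Z_q^D a set closed under a family of permutations {Γ_η}, and there exist valid responses RSP_1 = (t_z, t_r, ·, ·), RSP_2 = (η_2, z_2, ·, ·), RSP_3 = (η_3, z_3, ·, ·) to the same commitment CMT = (C_1, C_2, C_3) for challenges 1, 2, 3 respectively, then z' := Γ_{η_2}^{-1}(t_z) satisfies z' ∈ VALID and M·z' = u mod q. -/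
/-- Special soundness of the abstract Stern protocol: given a perfectly binding
commitment scheme, a public pair `(M, u)`, a set `VALID` closed under a family of
coordinate permutations `Γ_η (v) = v ∘ σ η`, and valid responses to the same
commitment `(C₁, C₂, C₃)` for all three challenges, the vector
`z' = Γ_{η₂}^{-1}(t_z)` satisfies `z' ∈ VALID` and `M·z' = u mod q`. -/
theorem stmt18 {C Rand S : Type*} (q r D : ℕ)
    (COMa : S × (Fin r → ZMod q) → Rand → C)
    (COMb : (Fin D → ZMod q) → Rand → C)
    (hCOMa : ∀ x ρ x' ρ', COMa x ρ = COMa x' ρ' → x = x')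
    (hCOMb : ∀ x ρ x' ρ', COMb x ρ = COMb x' ρ' → x = x')
    (M : Matrix (Fin r) (Fin D) (ZMod q)) (u : Fin r → ZMod q)
    (VALID : Set (Fin D → ZMod q))
    (σ : S → Equiv.Perm (Fin D))
    (hVALID : ∀ (η : S) (v : Fin D → ZMod q),
        v ∈ VALID ↔ (fun i => v (σ η i)) ∈ VALID)
    (tz tr z2 z3 : Fin D → ZMod q) (η2 η3 : S)
    (ρ1 ρ1' ρ2 ρ2' ρ3 ρ3' : Rand)
    (htz : tz ∈ VALID)
    (hC1 : COMa (η2, M.mulVec z2 - u) ρ1 = COMa (η3, M.mulVec z3) ρ1')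
    (hC2 : COMb tr ρ2 = COMb (fun i => z3 (σ η3 i)) ρ2')
    (hC3 : COMb (tz + tr) ρ3 = COMb (fun i => z2 (σ η2 i)) ρ3') :
    (fun i => tz ((σ η2)⁻¹ i)) ∈ VALID ∧
      M.mulVec (fun i => tz ((σ η2)⁻¹ i)) = u := by
  have h1 := hCOMa _ _ _ _ hC1
  have hη : η2 = η3 := congrArg Prod.fst h1
  have hMu : M.mulVec z2 - u = M.mulVec z3 := congrArg Prod.snd h1
  have h2 := hCOMb _ _ _ _ hC2
  have h3 := hCOMb _ _ _ _ hC3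
  subst hη
  have htz' : (fun i => tz ((σ η2)⁻¹ i)) = z2 - z3 := by
    funext i
    have : tz ((σ η2)⁻¹ i) = (tz + tr) ((σ η2)⁻¹ i) - tr ((σ η2)⁻¹ i) := by
      simp
    rw [this, h3, h2]
    simp
  constructor
  · have := (hVALID η2 (fun i => tz ((σ η2)⁻¹ i))).mpr
    simp only [Equiv.Perm.inv_def, Equiv.symm_apply_apply] at this
    exact this htz
  · rw [htz']
    have : M.mulVec (z2 - z3) = M.mulVec z2 - M.mulVec z3 := by
      rw [sub_eq_add_neg, Matrix.mulVec_add, Matrix.mulVec_neg, ← sub_eq_add_neg]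
    rw [this, ← hMu]
    abel
end
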